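/- arXiv:2008.03253 — 3 statements merged into one kernel-verified Lean document; each statement's English description precedes it below -/
import Mathlib

section
/- Let H be a complex Hilbert space, S ∈ B(H) with σ(S) = {0} and σ_p(S*) = ∅. Let e ∈ ker S be nonzero and f ∈ range(S*). Define the rank-one operator F = e ⊗ f by Fx = ⟨x, e⟩ f. Then σ(S* + αF) = {0} for all α ∈ ℂ. -/
open ContinuousLinearMap

/-! Writing `T = S*`, the rank-one operator satisfies `F T = 0` (as `e ⊥ range T`) and `F² = 0`
(as moreover `f ∈ range T`). Hence for `μ ≠ 0` one has the factorisation
`μ - (T + αF) = (1 - (α/μ) F)(μ - T)`, a product of a unipotent operator and of an invertible one,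
since `σ(T) = conj σ(S) = {0}`. So `σ(T + αF) ⊆ {0}`, and the spectrum is nonempty. -/

theorem spectrum.add_subset_insert_zero_of_mul_eq_zero {𝕜 A : Type*} [Field 𝕜] [Ring A]
    [Algebra 𝕜 A] {a b : A} (hba : b * a = 0) (hb : IsNilpotent b) :
    spectrum 𝕜 (a + b) ⊆ insert 0 (spectrum 𝕜 a) := by
  intro μ hμ
  by_contra! hμa
  rw [Set.mem_insert_iff, not_or] at hμa
  obtain ⟨hμ0, hμa⟩ := hμa
  have hfactor : algebraMap 𝕜 A μ - (a + b) = (1 - μ⁻¹ • b) * (algebraMap 𝕜 A μ - a) := by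
    rw [Algebra.algebraMap_eq_smul_one, sub_mul, one_mul, mul_sub, smul_mul_smul_comm,
      smul_mul_assoc, hba, inv_mul_cancel₀ hμ0, one_smul, mul_one, smul_zero]
    abel
  refine spectrum.mem_iff.mp hμ ?_
  rw [hfactor]
  exact (hb.smul μ⁻¹).isUnit_one_sub.mul (spectrum.notMem_iff.mp hμa)

section RankOne

variable {𝕜 H : Type*} [RCLike 𝕜] [NormedAddCommGroup H] [InnerProductSpace 𝕜 H] [CompleteSpace H]

theorem mul_adjoint_eq_zero_of_apply_eq_inner_smul {S F : H →L[𝕜] H} {e f : H} (he : S e = 0)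
    (hF : ∀ x, F x = inner 𝕜 e x • f) : F * adjoint S = 0 := by
  ext x
  rw [mul_apply_eq_comp, hF, adjoint_inner_right, he, inner_zero_left, zero_smul, zero_apply]

theorem mul_self_eq_zero_of_apply_eq_inner_smul {S F : H →L[𝕜] H} {e f : H} (he : S e = 0)
    (hf : f ∈ LinearMap.range (adjoint S : H →ₗ[𝕜] H)) (hF : ∀ x, F x = inner 𝕜 e x • f) :
    F * F = 0 := by
  obtain ⟨g, hg⟩ := hf
  have hFf : F f = 0 := by
    rw [← hg, coe_coe, ← mul_apply_eq_comp, mul_adjoint_eq_zero_of_apply_eq_inner_smul he hF,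
      zero_apply]
  ext x
  rw [mul_apply_eq_comp, hF x, map_smul, hFf, smul_zero, zero_apply]

end RankOne

theorem stmt_10_general {H : Type*} [NormedAddCommGroup H] [InnerProductSpace ℂ H]
    [CompleteSpace H] (S : H →L[ℂ] H)
    (hS : spectrum ℂ S = {0})
    (e f : H) (he : e ∈ LinearMap.ker (S : H →ₗ[ℂ] H)) (he0 : e ≠ 0)
    (hf : f ∈ LinearMap.range ((adjoint S : H →L[ℂ] H) : H →ₗ[ℂ] H))
    (F : H →L[ℂ] H) (hF : ∀ x : H, F x = (inner ℂ e x : ℂ) • f) :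
    ∀ α : ℂ, spectrum ℂ (adjoint S + α • F) = {0} := by
  intro α
  have hFT : F * adjoint S = 0 := mul_adjoint_eq_zero_of_apply_eq_inner_smul he hF
  have hFF : F * F = 0 := mul_self_eq_zero_of_apply_eq_inner_smul he hf hF
  have hnil : IsNilpotent (α • F) := ⟨2, by rw [pow_two, smul_mul_smul_comm, hFF, smul_zero]⟩
  have hσT : spectrum ℂ (adjoint S) = {0} := by
    rw [← star_eq_adjoint, spectrum.map_star, hS, Set.star_singleton, star_zero]
  have hsub := spectrum.add_subset_insert_zero_of_mul_eq_zero (𝕜 := ℂ)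
    (by rw [smul_mul_assoc, hFT, smul_zero]) hnil
  rw [hσT, Set.insert_eq_of_mem (Set.mem_singleton 0)] at hsub
  have : Nontrivial H := ⟨⟨e, 0, he0⟩⟩
  exact (spectrum.nonempty _).subset_singleton_iff.mp hsub

/-- Let `S ∈ B(H)` be quasinilpotent with `σ_p(S*) = ∅`, let `e ∈ ker S` be nonzero,
`f ∈ range S*`, and let `F` be the rank-one operator `F x = ⟨x, e⟩ f`. Then
`σ(S* + αF) = {0}` for all `α ∈ ℂ`. -/
theorem stmt_10 {H : Type*} [NormedAddCommGroup H] [InnerProductSpace ℂ H]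
    [CompleteSpace H] (S : H →L[ℂ] H)
    (hS : spectrum ℂ S = {0})
    (hps : ¬ ∃ (μ : ℂ) (x : H), x ≠ 0 ∧ adjoint S x = μ • x)
    (e f : H) (he : e ∈ LinearMap.ker (S : H →ₗ[ℂ] H)) (he0 : e ≠ 0)
    (hf : f ∈ LinearMap.range ((adjoint S : H →L[ℂ] H) : H →ₗ[ℂ] H))
    (F : H →L[ℂ] H) (hF : ∀ x : H, F x = (inner ℂ e x : ℂ) • f) :
    ∀ α : ℂ, spectrum ℂ (adjoint S + α • F) = {0} :=
  stmt_10_general S hS e f he he0 hf F hF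
end

section
/- Let ρ, φ > 0 with 0 < 4φ < ρ/3, let a ∈ ℂ with 2φ < |a| < 3φ, and let f be analytic on the closed ball of radius ρ centered at 0, with |f(z)| ≤ M on this ball and f(a) ≠ 0. Let N be the number of zeros of f (counted without multiplicity) in the closed ball of radius ρ/3 minus the closed ball of radius 4φ. Then N ≤ ln(M/|f(a)|) / ln(2/(1 + |a|/(4φ))). -/
/-!
If `f z₀ = 0` with `‖z₀‖ ≤ r < R`, then `f z = (z - z₀) • dslope f z₀ z`, and `dslope f z₀` is
again holomorphic, bounded by `M / (R - r)` on the circle `‖z‖ = R`, and vanishes at the other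
zeros. Removing the `N` zeros one at a time and applying the maximum modulus principle at the end
gives `‖f a‖ ≤ M ((‖a‖ + r) / (R - r)) ^ N`. With `R = ρ`, `r = ρ / 3` and `ρ ≥ 12 φ` the ratio
is at most `(1 + ‖a‖ / (4φ)) / 2 < 1`, and taking logarithms gives the bound. The zero set is
finite because zeros of a nonzero analytic function are isolated in the compact connected disk.
-/

open Metric

theorem AnalyticOnNhd.finite_setOf_zero_of_isCompact {𝕜 : Type*} [NontriviallyNormedField 𝕜]
    {F : Type*} [NormedAddCommGroup F] [NormedSpace 𝕜 F] {f : 𝕜 → F} {K : Set 𝕜} {x : 𝕜}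
    (hf : AnalyticOnNhd 𝕜 f K) (hK : IsCompact K) (hKc : IsConnected K) (hx : x ∈ K)
    (hfx : f x ≠ 0) : {z ∈ K | f z = 0}.Finite :=
  (hK.finite_sdiff_of_mem_codiscreteWithin
    (hf.preimage_zero_mem_codiscreteWithin hfx hx hKc)).subset fun _ hz ↦ by simpa using hz

section

variable {E : Type*} [NormedAddCommGroup E] [NormedSpace ℂ E]

theorem norm_le_of_forall_mem_sphere_norm_le {f : ℂ → E} {R M : ℝ} {a : ℂ} (hR : 0 < R)
    (hf : DifferentiableOn ℂ f (closedBall 0 R)) (hM : ∀ z ∈ sphere (0 : ℂ) R, ‖f z‖ ≤ M)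
    (ha : a ∈ closedBall (0 : ℂ) R) : ‖f a‖ ≤ M := by
  refine Complex.norm_le_of_forall_mem_frontier_norm_le (U := ball 0 R) isBounded_ball
    (hf.diffContOnCl_ball subset_rfl) ?_ ?_
  · rwa [frontier_ball 0 hR.ne']
  · rwa [closure_ball 0 hR.ne']

theorem norm_dslope_le_of_mem_sphere {f : ℂ → E} {R r M : ℝ} {z₀ z : ℂ} (hr : r < R)
    (hz₀ : ‖z₀‖ ≤ r) (hfz₀ : f z₀ = 0) (hz : z ∈ sphere (0 : ℂ) R) (hfz : ‖f z‖ ≤ M) :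
    ‖dslope f z₀ z‖ ≤ M / (R - r) := by
  have hdist : R - r ≤ ‖z - z₀‖ := by
    have := norm_sub_norm_le z z₀
    rw [mem_sphere_zero_iff_norm.mp hz] at this
    linarith
  rw [le_div_iff₀ (by linarith)]
  calc ‖dslope f z₀ z‖ * (R - r) ≤ ‖dslope f z₀ z‖ * ‖z - z₀‖ := by gcongr
    _ = ‖f z‖ := by
      rw [mul_comm, ← norm_smul, sub_smul_dslope, hfz₀, sub_zero]
    _ ≤ M := hfz

theorem norm_le_mul_pow_card_of_forall_zero [CompleteSpace E] {f : ℂ → E} {R r M : ℝ} {a : ℂ}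
    (S : Finset ℂ) (hR : 0 < R) (hr : r < R) (hf : DifferentiableOn ℂ f (closedBall 0 R))
    (hM : ∀ z ∈ sphere (0 : ℂ) R, ‖f z‖ ≤ M) (hS : ∀ z ∈ S, ‖z‖ ≤ r ∧ f z = 0)
    (ha : a ∈ closedBall (0 : ℂ) R) :
    ‖f a‖ ≤ M * ((‖a‖ + r) / (R - r)) ^ S.card := by
  classical
  induction S using Finset.induction_on generalizing f M with
  | empty => simpa using norm_le_of_forall_mem_sphere_norm_le hR hf hM ha
  | insert z₀ T hz₀T ih =>
    obtain ⟨hz₀, hfz₀⟩ := hS z₀ (Finset.mem_insert_self z₀ T)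
    have hf_eq : ∀ z, f z = (z - z₀) • dslope f z₀ z := fun z ↦ by
      rw [sub_smul_dslope, hfz₀, sub_zero]
    have hg : DifferentiableOn ℂ (dslope f z₀) (closedBall 0 R) :=
      (Complex.differentiableOn_dslope (closedBall_mem_nhds_of_mem
        (mem_ball_zero_iff.mpr (hz₀.trans_lt hr)))).mpr hf
    have hga := ih hg (fun z hz ↦ norm_dslope_le_of_mem_sphere hr hz₀ hfz₀ hz (hM z hz))
      fun z hz ↦
        have ⟨hzr, hfz⟩ := hS z (Finset.mem_insert_of_mem hz)
        have hzz₀ : z - z₀ ≠ 0 := sub_ne_zero.mpr (ne_of_mem_of_not_mem hz hz₀T)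
        ⟨hzr, (smul_eq_zero.mp ((hf_eq z).symm.trans hfz)).resolve_left hzz₀⟩
    have haz₀ : ‖a - z₀‖ ≤ ‖a‖ + r := (norm_sub_le a z₀).trans (by gcongr)
    rw [Finset.card_insert_of_notMem hz₀T, hf_eq, norm_smul, pow_succ]
    calc ‖a - z₀‖ * ‖dslope f z₀ a‖
        ≤ (‖a‖ + r) * (M / (R - r) * ((‖a‖ + r) / (R - r)) ^ T.card) :=
          mul_le_mul haz₀ hga (norm_nonneg _) (by linarith [norm_nonneg a, norm_nonneg z₀])
      _ = M * (((‖a‖ + r) / (R - r)) ^ T.card * ((‖a‖ + r) / (R - r))) := by ring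

end

theorem natCast_le_log_div_log_inv_of_le_mul_pow {x M c : ℝ} {n : ℕ} (hx : 0 < x)
    (hc₀ : 0 < c) (hc₁ : c < 1) (h : x ≤ M * c ^ n) :
    (n : ℝ) ≤ Real.log (M / x) / Real.log c⁻¹ := by
  have hM : 0 < M := pos_of_mul_pos_left (hx.trans_le h) (by positivity)
  rw [le_div_iff₀ (Real.log_pos (one_lt_inv₀ hc₀ |>.mpr hc₁)), ← Real.log_pow]
  refine Real.log_le_log (by positivity) ?_
  rwa [inv_pow, le_div_iff₀ hx, inv_mul_le_iff₀ (by positivity), mul_comm]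

theorem stmt_14_general (ρ φ M : ℝ) (a : ℂ) (f : ℂ → ℂ)
    (hφ : 0 < φ) (hρ : 4 * φ < ρ / 3)
    (ha₂ : ‖a‖ < 3 * φ)
    (hf : AnalyticOnNhd ℂ f (closedBall 0 ρ))
    (hM : ∀ z ∈ closedBall (0 : ℂ) ρ, ‖f z‖ ≤ M)
    (hfa : f a ≠ 0) :
    ({z : ℂ | z ∈ closedBall (0 : ℂ) (ρ / 3) \ closedBall (0 : ℂ) (4 * φ) ∧
        f z = 0}).Finite ∧
    (({z : ℂ | z ∈ closedBall (0 : ℂ) (ρ / 3) \ closedBall (0 : ℂ) (4 * φ) ∧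
        f z = 0}).ncard : ℝ) ≤
      Real.log (M / ‖f a‖) /
        Real.log (2 / (1 + ‖a‖ / (4 * φ))) := by
  set Z := {z : ℂ | z ∈ closedBall (0 : ℂ) (ρ / 3) \ closedBall (0 : ℂ) (4 * φ) ∧ f z = 0}
  have hρ₀ : 0 < ρ := by linarith
  have ha : a ∈ closedBall (0 : ℂ) ρ := mem_closedBall_zero_iff.mpr (by linarith)
  have hZ : Z.Finite :=
    (hf.finite_setOf_zero_of_isCompact (isCompact_closedBall 0 ρ)
      (isConnected_closedBall hρ₀.le) ha hfa).subset
      fun z hz ↦ ⟨closedBall_subset_closedBall (by linarith) hz.1.1, hz.2⟩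
  refine ⟨hZ, ?_⟩
  have hbound := norm_le_mul_pow_card_of_forall_zero hZ.toFinset hρ₀ (r := ρ / 3) (by linarith)
    hf.differentiableOn (fun z hz ↦ hM z (sphere_subset_closedBall hz))
    (fun z hz ↦ have hz := hZ.mem_toFinset.mp hz; ⟨mem_closedBall_zero_iff.mp hz.1.1, hz.2⟩) ha
  have hratio : (‖a‖ + ρ / 3) / (ρ - ρ / 3) ≤ (1 + ‖a‖ / (4 * φ)) / 2 := by
    have hq₀ : 0 ≤ ‖a‖ / (4 * φ) := by positivity
    have hq : ‖a‖ / (4 * φ) * (4 * φ) = ‖a‖ := div_mul_cancel₀ _ (by positivity)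
    rw [div_le_iff₀ (by linarith)]
    nlinarith [mul_le_mul_of_nonneg_left hρ.le hq₀]
  have hq : ‖a‖ / (4 * φ) < 1 := (div_lt_one (by positivity)).mpr (by linarith)
  rw [Set.ncard_eq_toFinset_card Z hZ, ← inv_div (1 + ‖a‖ / (4 * φ)) 2]
  refine natCast_le_log_div_log_inv_of_le_mul_pow (norm_pos_iff.mpr hfa) (by positivity)
    (by linarith) (hbound.trans ?_)
  gcongr
  · exact (norm_nonneg _).trans (hM a ha)
  · exact div_nonneg (by positivity) (by linarith)

/-- Zero-counting bound: if `0 < 4φ < ρ/3`, `2φ < |a| < 3φ`, `f` is analytic on the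
closed ball of radius `ρ` with `|f| ≤ M` there and `f(a) ≠ 0`, then the number `N` of
zeros of `f` in `closedBall 0 (ρ/3) \ closedBall 0 (4φ)` satisfies
`N ≤ ln(M/|f(a)|) / ln(2/(1 + |a|/(4φ)))`. -/
theorem stmt_14 (ρ φ M : ℝ) (a : ℂ) (f : ℂ → ℂ)
    (hφ : 0 < φ) (hρ : 4 * φ < ρ / 3)
    (ha₁ : 2 * φ < ‖a‖) (ha₂ : ‖a‖ < 3 * φ)
    (hf : AnalyticOnNhd ℂ f (closedBall 0 ρ))
    (hM : ∀ z ∈ closedBall (0 : ℂ) ρ, ‖f z‖ ≤ M)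
    (hfa : f a ≠ 0) :
    ({z : ℂ | z ∈ closedBall (0 : ℂ) (ρ / 3) \ closedBall (0 : ℂ) (4 * φ) ∧
        f z = 0}).Finite ∧
    (({z : ℂ | z ∈ closedBall (0 : ℂ) (ρ / 3) \ closedBall (0 : ℂ) (4 * φ) ∧
        f z = 0}).ncard : ℝ) ≤
      Real.log (M / ‖f a‖) /
        Real.log (2 / (1 + ‖a‖ / (4 * φ))) :=
  stmt_14_general ρ φ M a f hφ hρ ha₂ hf hM hfa
end

section
/- Let T ∈ B(H) be quasinilpotent, F = e ⊗ f rank one, and suppose T + α₀F is not quasinilpotent for some α₀ ≠ 0. Then for every R > 0 there exist α ∈ ℂ and λ ∈ ℂ with |λ| > R such that λ is an eigenvalue of T + αF. -/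
/-!
Write `R(z) = (z - T)⁻¹` and `g(z) = ⟪e, R(z) f⟫`, holomorphic on `ℂ \ {0}`. If `g(λ) ≠ 0`, then
`x = R(λ) f` is an eigenvector of `T + g(λ)⁻¹ F` for `λ`, since `F x = g(λ) f` and `(λ - T) x = f`.
If `g(λ) = 0`, then `(λ - T)⁻¹ F` squares to zero, so `λ - T - αF = (λ - T)(1 - α (λ - T)⁻¹ F)` is
invertible for every `α`. Hence if no `|λ| > R` were an eigenvalue of some `T + αF`, `g` would vanish
for `|λ| > R`, so on all of `ℂ \ {0}` by the identity theorem, and every `T + αF` would be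
quasinilpotent.
-/

open Set Filter

theorem IsUnit.sub_of_mul_inverse_mul_eq_zero {R : Type*} [Ring R] {a b : R} (ha : IsUnit a)
    (h : b * Ring.inverse a * b = 0) : IsUnit (a - b) := by
  have hnil : IsNilpotent (Ring.inverse a * b) :=
    ⟨2, by rw [pow_two, mul_assoc, ← mul_assoc b, h, mul_zero]⟩
  have hfactor : a - b = a * (1 - Ring.inverse a * b) := by
    rw [mul_sub, mul_one, ← mul_assoc, Ring.mul_inverse_cancel a ha, one_mul]
  exact hfactor ▸ ha.mul hnil.isUnit_one_sub

theorem AnalyticOnNhd.eqOn_zero_of_forall_lt_norm {𝕜 E : Type*} [NontriviallyNormedField 𝕜]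
    [NormedAddCommGroup E] [NormedSpace 𝕜 E] {g : 𝕜 → E} {U : Set 𝕜} {R : ℝ}
    (hg : AnalyticOnNhd 𝕜 g U) (hU : IsPreconnected U) (hRU : {z | R < ‖z‖} ⊆ U)
    (hvan : ∀ z, R < ‖z‖ → g z = 0) : EqOn g 0 U := by
  obtain ⟨z₀, hz₀⟩ := NormedField.exists_lt_norm 𝕜 R
  have hopen : IsOpen {z : 𝕜 | R < ‖z‖} := isOpen_lt continuous_const continuous_norm
  exact hg.eqOn_zero_of_preconnected_of_eventuallyEq_zero hU (hRU hz₀)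
    (eventually_of_mem (hopen.mem_nhds hz₀) hvan)

section RankOnePerturbation

variable {𝕜 E : Type*} [NontriviallyNormedField 𝕜] [NormedAddCommGroup E] [NormedSpace 𝕜 E]
  {T F : E →L[𝕜] E} {φ : E →L[𝕜] 𝕜} {f : E} {z : 𝕜}

theorem apply_resolvent_apply (hz : z ∈ resolventSet 𝕜 T) (x : E) :
    T (resolvent T z x) = z • resolvent T z x - x := by
  have hinv : (algebraMap 𝕜 _ z - T) (resolvent T z x) = x := by
    rw [resolvent, ← mul_apply_eq_comp, Ring.mul_inverse_cancel _ hz]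
    rfl
  rw [sub_apply, Algebra.algebraMap_eq_smul_one, smul_apply,
    one_apply_eq_self] at hinv
  rw [← sub_sub_cancel (z • resolvent T z x) (T (resolvent T z x)), hinv]

theorem exists_eigenvector_add_smul_of_resolvent_ne_zero (hF : ∀ x, F x = φ x • f)
    (hz : z ∈ resolventSet 𝕜 T) (hφ : φ (resolvent T z f) ≠ 0) :
    ∃ α : 𝕜, ∃ x : E, x ≠ 0 ∧ (T + α • F) x = z • x := by
  refine ⟨(φ (resolvent T z f))⁻¹, resolvent T z f, fun h => hφ (by rw [h, map_zero]), ?_⟩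
  rw [add_apply, smul_apply, hF, smul_smul,
    inv_mul_cancel₀ hφ, one_smul, apply_resolvent_apply hz, sub_add_cancel]

theorem mem_resolventSet_add_smul_of_resolvent_eq_zero (hF : ∀ x, F x = φ x • f)
    (hz : z ∈ resolventSet 𝕜 T) (hφ : φ (resolvent T z f) = 0) (α : 𝕜) :
    z ∈ resolventSet 𝕜 (T + α • F) := by
  have hFRF : (α • F) * resolvent T z * (α • F) = 0 := by
    ext x
    simp [hF, hφ]
  rw [resolventSet, mem_ofPred_eq, ← sub_sub]
  exact IsUnit.sub_of_mul_inverse_mul_eq_zero hz hFRF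

theorem spectrum_add_smul_subset (hF : ∀ x, F x = φ x • f)
    (hφ : ∀ z ∈ resolventSet 𝕜 T, φ (resolvent T z f) = 0) (α : 𝕜) :
    spectrum 𝕜 (T + α • F) ⊆ spectrum 𝕜 T :=
  compl_subset_compl.mpr fun z hz =>
    mem_resolventSet_add_smul_of_resolvent_eq_zero hF hz (hφ z hz) α

end RankOnePerturbation

theorem analyticOnNhd_apply_resolvent {E : Type*} [NormedAddCommGroup E] [NormedSpace ℂ E]
    [CompleteSpace E] (T : E →L[ℂ] E) (φ : E →L[ℂ] ℂ) (f : E) :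
    AnalyticOnNhd ℂ (fun z => φ (resolvent T z f)) (resolventSet ℂ T) := by
  refine DifferentiableOn.analyticOnNhd (fun z hz => ?_) (spectrum.isOpen_resolventSet T)
  have hR := (spectrum.hasDerivAt_resolvent_const_left hz).differentiableAt
  exact ((φ ∘L ContinuousLinearMap.apply ℂ E f).differentiableAt.comp z hR).differentiableWithinAt

/-- If `T` is quasinilpotent, `F = e ⊗ f` is rank one, and `T + α₀F` is not
quasinilpotent for some `α₀ ≠ 0`, then for every `R > 0` there exist `α ∈ ℂ` and an
eigenvalue `λ` of `T + αF` with `|λ| > R`. -/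
theorem stmt_18 {H : Type*} [NormedAddCommGroup H] [InnerProductSpace ℂ H]
    [CompleteSpace H] (T : H →L[ℂ] H)
    (hT : spectrum ℂ T = {0})
    (e f : H) (F : H →L[ℂ] H) (hF : ∀ x : H, F x = (inner ℂ e x : ℂ) • f)
    (hnotq : ∃ α₀ : ℂ, α₀ ≠ 0 ∧ spectrum ℂ (T + α₀ • F) ≠ {0}) :
    ∀ R : ℝ, 0 < R → ∃ (α l : ℂ), R < ‖l‖ ∧
      ∃ x : H, x ≠ 0 ∧ (T + α • F) x = l • x := by
  intro R hR
  by_contra! hno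
  have hF' : ∀ x, F x = innerSL ℂ e x • f := hF
  have hres : resolventSet ℂ T = {0}ᶜ := by rw [← hT, spectrum, compl_compl]
  have hfar_res : {z : ℂ | R < ‖z‖} ⊆ resolventSet ℂ T := fun z hz =>
    hres ▸ norm_pos_iff.mp (hR.trans hz)
  have hfar : ∀ z, R < ‖z‖ → innerSL ℂ e (resolvent T z f) = 0 := fun z hz => by
    by_contra hne
    obtain ⟨α, x, hx, hTx⟩ :=
      exists_eigenvector_add_smul_of_resolvent_ne_zero hF' (hfar_res hz) hne
    exact hno α z hz x hx hTx
  have hvan := (analyticOnNhd_apply_resolvent T (innerSL ℂ e) f).eqOn_zero_of_forall_lt_norm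
    (hres ▸ (isConnected_compl_singleton_of_one_lt_rank (by simp) 0).isPreconnected)
    hfar_res hfar
  obtain ⟨α₀, -, hspec⟩ := hnotq
  have : Nontrivial (H →L[ℂ] H) := by
    by_contra h
    have := not_nontrivial_iff_subsingleton.mp h
    simp [spectrum.of_subsingleton] at hT
  exact hspec <| (spectrum.nonempty _).subset_singleton_iff.mp
    (hT ▸ spectrum_add_smul_subset hF' hvan α₀)
end
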